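/- (Matrix form of Proposition 4.3.) Let k be a field, let d ≥ 1, let t_1, …, t_d be pairwise distinct nonnegative integers, and let r_1 < r_2 < … < r_d denote the increasing rearrangement of t_1, …, t_d. Set C := {(i,j) : 1 ≤ i < j ≤ d and t_i < t_j}. Let A be a d×d matrix over the polynomial ring k[u] which is upper triangular, whose diagonal entries are A_{ii} = a_i·u^{t_i} with a_i ∈ k nonzero, and which satisfies A_{ij} = 0 whenever i < j and t_i > t_j (i.e. A ∈ B_C(k[u]) up to the diagonal not being a unit). Then there exists a unique permutation σ ∈ W_C such that the conjugate w_σ⁻¹ · A · w_σ is upper triangular with diagonal equal to (a_{σ(1)}·u^{r_1}, a_{σ(2)}·u^{r_2}, …, a_{σ(d)}·u^{r_d}). -/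

import Mathlib

/-!
Conjugating by `w_σ` reindexes `A` to `(A_{σ i, σ j})`, so its diagonal is `a_{σ i} u^{t_{σ i}}`.
Matching degrees forces `t ∘ σ = r`, i.e. `σ` is the permutation sorting `t`, which is unique
since `t` is injective. For that `σ`, an entry below the diagonal has `t_{σ j} < t_{σ i}`, and
such entries of `A` vanish: below the diagonal because `A` is upper triangular, above it by the
`B_C` condition.
-/

/-- The permutation matrix `w_σ` with entries `(w_σ)_{ij} = δ_{i, σ(j)}`. -/
def permMat {d : ℕ} (S : Type*) [CommRing S] (σ : Equiv.Perm (Fin d)) :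
    Matrix (Fin d) (Fin d) S :=
  Matrix.of fun i j => if i = σ j then 1 else 0

section PermMat

variable {d : ℕ} {S : Type*} [CommRing S]

lemma permMat_eq_permMatrix (σ : Equiv.Perm (Fin d)) :
    permMat S σ = σ⁻¹.permMatrix S := by
  ext i j
  simp [permMat, Equiv.eq_symm_apply, eq_comm]

lemma inv_permMat (σ : Equiv.Perm (Fin d)) : (permMat S σ)⁻¹ = σ.permMatrix S := by
  refine Matrix.inv_eq_left_inv ?_
  rw [permMat_eq_permMatrix, ← Matrix.permMatrix_mul, inv_mul_cancel, Matrix.permMatrix_one]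

lemma inv_permMat_mul_mul_permMat (σ : Equiv.Perm (Fin d)) (A : Matrix (Fin d) (Fin d) S) :
    (permMat S σ)⁻¹ * A * permMat S σ = A.submatrix σ σ := by
  rw [inv_permMat, permMat_eq_permMatrix, Equiv.Perm.permMatrix, Equiv.Perm.permMatrix,
    PEquiv.toMatrix_toPEquiv_mul, PEquiv.mul_toMatrix_toPEquiv, Matrix.submatrix_submatrix]
  rfl

end PermMat

lemma Polynomial.C_mul_X_pow_left_inj {R : Type*} [Semiring R] {a : R} (ha : a ≠ 0) {m n : ℕ} :
    C a * X ^ m = C a * X ^ n ↔ m = n := by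
  simp only [C_mul_X_pow_eq_monomial, monomial_left_inj ha]

lemma Matrix.apply_eq_zero_of_weight_lt {ι α R : Type*} [LinearOrder ι] [Preorder α] [Zero R]
    {t : ι → α} {A : Matrix ι ι R} (hA_upper : ∀ i j, j < i → A i j = 0)
    (hA_zero : ∀ i j, i < j → t j < t i → A i j = 0) {i j : ι} (h : t j < t i) :
    A i j = 0 := by
  rcases lt_trichotomy i j with hij | rfl | hji
  · exact hA_zero i j hij h
  · exact absurd h (lt_irrefl _)
  · exact hA_upper i j hji

theorem exists_unique_perm_conj_upperTriangular_general {d : ℕ}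
    (k : Type*) [Field k] (t : Fin d → ℕ) (ht : Function.Injective t)
    (r : Fin d → ℕ) (hr_mono : StrictMono r)
    (hr_rearrange : ∃ π : Equiv.Perm (Fin d), ∀ i, r i = t (π i))
    (C : Set (Fin d × Fin d))
    (hC : C = {p : Fin d × Fin d | p.1 < p.2 ∧ t p.1 < t p.2})
    (a : Fin d → k) (ha : ∀ i, a i ≠ 0)
    (A : Matrix (Fin d) (Fin d) (Polynomial k))
    (hA_upper : ∀ i j : Fin d, j < i → A i j = 0)
    (hA_diag : ∀ i : Fin d, A i i = Polynomial.C (a i) * Polynomial.X ^ (t i))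
    (hA_zero : ∀ i j : Fin d, i < j → t j < t i → A i j = 0) :
    ∃! σ : Equiv.Perm (Fin d),
      (∀ p ∈ C, σ⁻¹ p.1 < σ⁻¹ p.2) ∧
      (∀ i j : Fin d, j < i →
        ((permMat (Polynomial k) σ)⁻¹ * A * permMat (Polynomial k) σ) i j = 0) ∧
      (∀ i : Fin d,
        ((permMat (Polynomial k) σ)⁻¹ * A * permMat (Polynomial k) σ) i i =
          Polynomial.C (a (σ i)) * Polynomial.X ^ (r i)) := by
  obtain ⟨π, hπ⟩ := hr_rearrange
  obtain rfl : r = t ∘ π := funext hπ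
  simp only [inv_permMat_mul_mul_permMat, Matrix.submatrix_apply]
  refine ⟨π, ⟨?_, fun i j hji => ?_, fun i => ?_⟩, ?_⟩
  · subst hC
    rintro ⟨i, j⟩ ⟨-, hij⟩
    exact hr_mono.lt_iff_lt.mp (by simpa using hij)
  · exact Matrix.apply_eq_zero_of_weight_lt hA_upper hA_zero (hr_mono hji)
  · exact hA_diag (π i)
  · rintro τ ⟨-, -, hτ⟩
    exact Equiv.ext fun i => ht <|
      (Polynomial.C_mul_X_pow_left_inj (ha _)).mp ((hA_diag (τ i)).symm.trans (hτ i))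

/-- matrix form of Prop. 4.3: let `k` be a field, `t_1, …, t_d` pairwise
distinct nonnegative integers with increasing rearrangement `r_1 < … < r_d`, and
`C = {(i,j) : i < j and t_i < t_j}`. If `A` over `k[u]` is upper triangular with
diagonal entries `A_{ii} = a_i·u^{t_i}` (`a_i ∈ k` nonzero) and `A_{ij} = 0` whenever
`i < j` and `t_i > t_j`, then there is a unique permutation `σ ∈ W_C` such that
`w_σ⁻¹ · A · w_σ` is upper triangular with diagonal `(a_{σ(1)}·u^{r_1}, …, a_{σ(d)}·u^{r_d})`. -/
theorem exists_unique_perm_conj_upperTriangular {d : ℕ} (hd : 1 ≤ d)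
    (k : Type*) [Field k] (t : Fin d → ℕ) (ht : Function.Injective t)
    (r : Fin d → ℕ) (hr_mono : StrictMono r)
    (hr_rearrange : ∃ π : Equiv.Perm (Fin d), ∀ i, r i = t (π i))
    (C : Set (Fin d × Fin d))
    (hC : C = {p : Fin d × Fin d | p.1 < p.2 ∧ t p.1 < t p.2})
    (a : Fin d → k) (ha : ∀ i, a i ≠ 0)
    (A : Matrix (Fin d) (Fin d) (Polynomial k))
    (hA_upper : ∀ i j : Fin d, j < i → A i j = 0)
    (hA_diag : ∀ i : Fin d, A i i = Polynomial.C (a i) * Polynomial.X ^ (t i))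
    (hA_zero : ∀ i j : Fin d, i < j → t j < t i → A i j = 0) :
    ∃! σ : Equiv.Perm (Fin d),
      (∀ p ∈ C, σ⁻¹ p.1 < σ⁻¹ p.2) ∧
      (∀ i j : Fin d, j < i →
        ((permMat (Polynomial k) σ)⁻¹ * A * permMat (Polynomial k) σ) i j = 0) ∧
      (∀ i : Fin d,
        ((permMat (Polynomial k) σ)⁻¹ * A * permMat (Polynomial k) σ) i i =
          Polynomial.C (a (σ i)) * Polynomial.X ^ (r i)) :=
  exists_unique_perm_conj_upperTriangular_general k t ht r hr_mono hr_rearrange C hC a ha A hA_upper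
    hA_diag hA_zero
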